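/- In every finite normal-form game Γ, for every weakly payoff monotone strategy profile μ and every ε > 0, there exists an interior payoff monotone strategy profile γ for Γ such that max over all players i and actions a_i of |μ_i(a_i) − γ_i(a_i)| is less than ε; consequently, a profile is the limit of weakly payoff monotone profiles if and only if it is the limit of interior payoff monotone profiles. -/

import Mathlib

open Filter Topology

section GameDefs

variable {N : Type} [Fintype N] [DecidableEq N] {A : N → Type}
  [∀ i, Fintype (A i)] [∀ i, DecidableEq (A i)]

/-- A mixed-strategy profile: each `σ i` is a probability distribution on `A i`. -/
def IsStrategy (σ : ∀ i, A i → ℝ) : Prop :=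
  (∀ i a, 0 ≤ σ i a) ∧ ∀ i, ∑ a, σ i a = 1

/-- An interior profile places positive probability on every action. -/
def Interior (σ : ∀ i, A i → ℝ) : Prop :=
  ∀ i a, 0 < σ i a

/-- Expected utility of player `i` at profile `σ`. -/
noncomputable def expUtil (u : ∀ i : N, (∀ j, A j) → ℝ) (σ : ∀ i, A i → ℝ) (i : N) : ℝ :=
  ∑ a : ∀ j, A j, u i a * ∏ j, σ j (a j)

/-- Expected utility of player `i` from playing action `ai` against `σ₋ᵢ`. -/
noncomputable def devUtil (u : ∀ i : N, (∀ j, A j) → ℝ) (σ : ∀ i, A i → ℝ)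
    (i : N) (ai : A i) : ℝ :=
  expUtil u (Function.update σ i (fun b => if b = ai then (1 : ℝ) else 0)) i

/-- Nash equilibrium. -/
def IsNash (u : ∀ i : N, (∀ j, A j) → ℝ) (σ : ∀ i, A i → ℝ) : Prop :=
  IsStrategy σ ∧ ∀ (i : N) (μ : A i → ℝ), (∀ a, 0 ≤ μ a) → (∑ a, μ a = 1) →
    expUtil u (Function.update σ i μ) i ≤ expUtil u σ i

/-- Weak payoff monotonicity: differences in behavior reveal differences in payoffs. -/
def WeaklyPayoffMonotone (u : ∀ i : N, (∀ j, A j) → ℝ) (σ : ∀ i, A i → ℝ) : Prop :=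
  IsStrategy σ ∧ ∀ (i : N) (ai bi : A i), σ i bi < σ i ai →
    devUtil u σ i bi < devUtil u σ i ai

/-- Payoff monotonicity. -/
def PayoffMonotone (u : ∀ i : N, (∀ j, A j) → ℝ) (σ : ∀ i, A i → ℝ) : Prop :=
  IsStrategy σ ∧ ∀ (i : N) (ai bi : A i),
    σ i bi ≤ σ i ai ↔ devUtil u σ i bi ≤ devUtil u σ i ai

/-- Pointwise convergence of a sequence of profiles. -/
def ConvergesTo (s : ℕ → ∀ i, A i → ℝ) (σ : ∀ i, A i → ℝ) : Prop :=
  ∀ (i : N) (ai : A i), Tendsto (fun n => s n i ai) atTop (𝓝 (σ i ai))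

/-- Empirical equilibrium: a Nash equilibrium that is the limit of weakly payoff
monotone profiles. -/
def IsEmpirical (u : ∀ i : N, (∀ j, A j) → ℝ) (σ : ∀ i, A i → ℝ) : Prop :=
  IsNash u σ ∧ ∃ s : ℕ → ∀ i, A i → ℝ,
    (∀ n, WeaklyPayoffMonotone u (s n)) ∧ ConvergesTo s σ

/-- Proper equilibrium (Myerson). -/
def IsProper (u : ∀ i : N, (∀ j, A j) → ℝ) (σ : ∀ i, A i → ℝ) : Prop :=
  IsStrategy σ ∧ ∃ s : ℕ → ∀ i, A i → ℝ,
    (∀ n, IsStrategy (s n) ∧ Interior (s n) ∧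
      ∀ (i : N) (ai bi : A i),
        devUtil u (s n) i bi < devUtil u (s n) i ai →
          s n i bi ≤ (1 / (n + 1) : ℝ) * s n i ai) ∧
    ConvergesTo s σ

/-- Perfect equilibrium (Selten, in Myerson's formulation). -/
def IsPerfect (u : ∀ i : N, (∀ j, A j) → ℝ) (σ : ∀ i, A i → ℝ) : Prop :=
  IsStrategy σ ∧ ∃ s : ℕ → ∀ i, A i → ℝ,
    (∀ n, IsStrategy (s n) ∧ Interior (s n) ∧
      ∀ (i : N) (ai : A i), (1 / (n + 1) : ℝ) < s n i ai →
        ∀ bi : A i, devUtil u (s n) i bi ≤ devUtil u (s n) i ai) ∧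
    ConvergesTo s σ

/-- `bi` weakly dominates `ai` for player `i`. -/
def WeaklyDominates (u : ∀ i : N, (∀ j, A j) → ℝ) (i : N) (bi ai : A i) : Prop :=
  (∀ a : ∀ j, A j, u i (Function.update a i ai) ≤ u i (Function.update a i bi)) ∧
  ∃ a : ∀ j, A j, u i (Function.update a i ai) < u i (Function.update a i bi)

/-- Undominated Nash equilibrium. -/
def IsUndominatedNash (u : ∀ i : N, (∀ j, A j) → ℝ) (σ : ∀ i, A i → ℝ) : Prop :=
  IsNash u σ ∧ ∀ (i : N) (ai : A i), 0 < σ i ai →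
    ¬ ∃ bi : A i, WeaklyDominates u i bi ai

end GameDefs

/-- A regular quantal response function on a finite set of actions `B`:
interiority, continuity, responsiveness, and monotonicity. -/
def IsRegularQRF {B : Type} [Fintype B] [DecidableEq B]
    (p : (B → ℝ) → (B → ℝ)) : Prop :=
  (∀ x, (∀ a, 0 < p x a) ∧ ∑ a, p x a = 1) ∧
  Continuous p ∧
  (∀ (x : B → ℝ) (η : ℝ) (a : B), 0 < η →
    p x a < p (Function.update x a (x a + η)) a) ∧
  ∀ (x : B → ℝ) (a b : B), x b < x a → p x b < p x a

section QREDefs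

variable {N : Type} [Fintype N] [DecidableEq N] {A : N → Type}
  [∀ i, Fintype (A i)] [∀ i, DecidableEq (A i)]

/-- Quantal response equilibrium with respect to a profile of QRFs `p`. -/
def IsQRE (u : ∀ i : N, (∀ j, A j) → ℝ) (p : ∀ i, (A i → ℝ) → (A i → ℝ))
    (σ : ∀ i, A i → ℝ) : Prop :=
  ∀ i : N, σ i = p i (fun ai => devUtil u σ i ai)

/-- A sequence of profiles of QRFs is utility maximizing in the limit. -/
def UtilityMaximizingInLimit (u : ∀ i : N, (∀ j, A j) → ℝ)
    (p : ℕ → ∀ i, (A i → ℝ) → (A i → ℝ)) : Prop :=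
  ∀ (s : ℕ → ∀ i, A i → ℝ) (σ : ∀ i, A i → ℝ),
    (∀ n, IsQRE u (p n) (s n)) → ConvergesTo s σ → IsNash u σ

/-- `σ` is approachable by regular QRE that are utility maximizing in the limit. -/
def ApproachableByRegularQRE (u : ∀ i : N, (∀ j, A j) → ℝ) (σ : ∀ i, A i → ℝ) : Prop :=
  ∃ p : ℕ → ∀ i, (A i → ℝ) → (A i → ℝ),
    (∀ n i, IsRegularQRF (p n i)) ∧ UtilityMaximizingInLimit u p ∧
    ∃ s : ℕ → ∀ i, A i → ℝ, (∀ n, IsQRE u (p n) (s n)) ∧ ConvergesTo s σ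

end QREDefs

/-- A control cost function (van Damme), bundled with its derivative on `(0,1]`. -/
structure ControlCost where
  f : ℝ → ℝ
  f' : ℝ → ℝ
  hasDeriv : ∀ x ∈ Set.Ioc (0:ℝ) 1, HasDerivWithinAt f (f' x) (Set.Ioc (0:ℝ) 1) x
  contDeriv : ContinuousOn f' (Set.Ioc (0:ℝ) 1)
  anti : StrictAntiOn f (Set.Ioc (0:ℝ) 1)
  convex : StrictConvexOn ℝ (Set.Ioc (0:ℝ) 1) f
  atOne : f 1 = 0
  blowup : Tendsto f (nhdsWithin 0 (Set.Ioi (0:ℝ))) atTop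

/-! Given a weakly payoff monotone `μ` and small `0 < δ ≪ η`, tilt a profile `σ` to
`(1 - η) μᵢ + η · uniformᵢ + δ (Uᵢ(σ, ·) - mean Uᵢ(σ, ·))`, where `Uᵢ(σ, a)` is the payoff of
action `a` against `σ`. This map sends profiles to interior profiles and, payoffs being Lipschitz in
the profile, is a contraction for small `δ`; let `γ` be its fixed point. Then
`γᵢ(a) - γᵢ(b) = (1 - η)(μᵢ(a) - μᵢ(b)) + δ (Uᵢ(γ, a) - Uᵢ(γ, b))`. Where `μᵢ` ties `a` and `b`,
`γᵢ` orders them as the payoffs do; where `μᵢ(a) > μᵢ(b)`, weak payoff monotonicity of `μ` and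
continuity of payoffs (`γ` is close to `μ`) give `Uᵢ(γ, a) > Uᵢ(γ, b)`, so both terms are
positive. Hence `γ` is interior, payoff monotone and close to `μ`. -/

open scoped BigOperators

lemma norm_prod_sub_prod_le {ι R : Type*} [NormedCommRing R] [NormOneClass R] (s : Finset ι)
    {x y : ι → R} (hx : ∀ i ∈ s, ‖x i‖ ≤ 1) (hy : ∀ i ∈ s, ‖y i‖ ≤ 1) :
    ‖∏ i ∈ s, x i - ∏ i ∈ s, y i‖ ≤ ∑ i ∈ s, ‖x i - y i‖ := by
  classical
  induction s using Finset.induction with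
  | empty => simp
  | @insert a s ha ih =>
    simp only [Finset.mem_insert, forall_eq_or_imp] at hx hy
    rw [Finset.prod_insert ha, Finset.prod_insert ha, Finset.sum_insert ha]
    have hys : ‖∏ i ∈ s, y i‖ ≤ 1 :=
      (Finset.norm_prod_le _ _).trans (Finset.prod_le_one (fun _ _ => norm_nonneg _) hy.2)
    calc ‖x a * ∏ i ∈ s, x i - y a * ∏ i ∈ s, y i‖
        = ‖x a * (∏ i ∈ s, x i - ∏ i ∈ s, y i) + (x a - y a) * ∏ i ∈ s, y i‖ := by
          congr 1; ring
      _ ≤ ‖x a‖ * ‖∏ i ∈ s, x i - ∏ i ∈ s, y i‖ + ‖x a - y a‖ * ‖∏ i ∈ s, y i‖ :=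
          (norm_add_le _ _).trans (add_le_add (norm_mul_le _ _) (norm_mul_le _ _))
      _ ≤ 1 * ∑ i ∈ s, ‖x i - y i‖ + ‖x a - y a‖ * 1 := by
          gcongr
          exacts [hx.1, ih hx.2 hy.2]
      _ = ‖x a - y a‖ + ∑ i ∈ s, ‖x i - y i‖ := by ring

lemma abs_sub_expect_le {B : Type*} [Fintype B] {f : B → ℝ} {M : ℝ}
    (hf : ∀ b, |f b| ≤ M) (a : B) : |f a - 𝔼 b, f b| ≤ 2 * M := by
  have : Nonempty B := ⟨a⟩
  have hmean : |𝔼 b, f b| ≤ M :=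
    (Finset.abs_expect_le _ _).trans <|
      (Finset.expect_le_expect fun b _ => hf b).trans (Fintype.expect_const M).le
  calc |f a - 𝔼 b, f b| ≤ |f a| + |𝔼 b, f b| := abs_sub _ _
    _ ≤ 2 * M := by linarith [hf a]

lemma sum_sub_expect {B : Type*} [Fintype B] (f : B → ℝ) :
    ∑ a, (f a - 𝔼 b, f b) = 0 := by
  rw [Finset.sum_sub_distrib, Finset.sum_const, Finset.card_univ, Fintype.card_smul_expect,
    sub_self]

section Profiles

variable {N : Type} {A : N → Type} [∀ i, Fintype (A i)]

lemma IsStrategy.le_one {σ : ∀ i, A i → ℝ} (hσ : IsStrategy σ) (i : N) (a : A i) :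
    σ i a ≤ 1 :=
  hσ.2 i ▸ Finset.single_le_sum (fun b _ => hσ.1 i b) (Finset.mem_univ a)

lemma IsStrategy.abs_le_one {σ : ∀ i, A i → ℝ} (hσ : IsStrategy σ) (i : N) (a : A i) :
    |σ i a| ≤ 1 :=
  (abs_of_nonneg (hσ.1 i a)).trans_le (hσ.le_one i a)

lemma IsStrategy.update [DecidableEq N] {σ : ∀ i, A i → ℝ} (hσ : IsStrategy σ) (i : N)
    {τ : A i → ℝ} (hτ₀ : ∀ a, 0 ≤ τ a) (hτ₁ : ∑ a, τ a = 1) :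
    IsStrategy (Function.update σ i τ) :=
  ⟨(Function.forall_update_iff σ fun _ ρ => ∀ a, 0 ≤ ρ a).2 ⟨hτ₀, fun j _ => hσ.1 j⟩,
    (Function.forall_update_iff σ fun _ ρ => ∑ a, ρ a = 1).2 ⟨hτ₁, fun j _ => hσ.2 j⟩⟩

lemma IsStrategy.update_pure [DecidableEq N] [∀ i, DecidableEq (A i)] {σ : ∀ i, A i → ℝ}
    (hσ : IsStrategy σ) (i : N) (ai : A i) :
    IsStrategy (Function.update σ i fun b => if b = ai then (1 : ℝ) else 0) :=
  hσ.update i (fun b => by split_ifs <;> norm_num) (by simp)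

lemma abs_sub_le_dist_profile [Fintype N] (σ τ : ∀ i, A i → ℝ) (i : N) (a : A i) :
    |σ i a - τ i a| ≤ dist σ τ :=
  (Real.dist_eq _ _).symm.trans_le <|
    (dist_le_pi_dist (σ i) (τ i) a).trans (dist_le_pi_dist σ τ i)

lemma dist_profile_le [Fintype N] {σ τ : ∀ i, A i → ℝ} {r : ℝ} (hr : 0 ≤ r)
    (h : ∀ i a, |σ i a - τ i a| ≤ r) : dist σ τ ≤ r :=
  (dist_pi_le_iff hr).2 fun i =>
    (dist_pi_le_iff hr).2 fun a => (Real.dist_eq _ _).trans_le (h i a)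

lemma isClosed_setOf_isStrategy : IsClosed {σ : ∀ i, A i → ℝ | IsStrategy σ} := by
  simp only [IsStrategy, Set.ofPred_and, Set.ofPred_forall]
  exact (isClosed_iInter fun i => isClosed_iInter fun a =>
      isClosed_le continuous_const (by fun_prop)).inter
    (isClosed_iInter fun i => isClosed_eq (by fun_prop) continuous_const)

lemma abs_expUtil_le [Fintype N] [DecidableEq N] (u : N → (∀ j, A j) → ℝ)
    {σ : ∀ i, A i → ℝ} (hσ : IsStrategy σ) (i : N) : |expUtil u σ i| ≤ ∑ a, |u i a| := by
  refine (Finset.abs_sum_le_sum_abs _ _).trans (Finset.sum_le_sum fun a _ => ?_)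
  rw [abs_mul]
  refine mul_le_of_le_one_right (abs_nonneg _) ?_
  rw [abs_of_nonneg (Finset.prod_nonneg fun j _ => hσ.1 j (a j))]
  exact Finset.prod_le_one (fun j _ => hσ.1 j (a j)) fun j _ => hσ.le_one j (a j)

lemma abs_expUtil_sub_le [Fintype N] [DecidableEq N] (u : N → (∀ j, A j) → ℝ)
    {σ τ : ∀ i, A i → ℝ} (hσ : IsStrategy σ) (hτ : IsStrategy τ) (i : N) :
    |expUtil u σ i - expUtil u τ i| ≤ (∑ a, |u i a|) * (Fintype.card N * dist σ τ) := by
  rw [expUtil, expUtil, ← Finset.sum_sub_distrib, Finset.sum_mul]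
  refine (Finset.abs_sum_le_sum_abs _ _).trans (Finset.sum_le_sum fun a _ => ?_)
  rw [← mul_sub, abs_mul]
  gcongr
  calc |∏ j, σ j (a j) - ∏ j, τ j (a j)| ≤ ∑ j, |σ j (a j) - τ j (a j)| :=
        norm_prod_sub_prod_le (x := fun j => σ j (a j)) (y := fun j => τ j (a j)) _
          (fun j _ => hσ.abs_le_one j (a j)) fun j _ => hτ.abs_le_one j (a j)
    _ ≤ ∑ _j : N, dist σ τ := Finset.sum_le_sum fun j _ => abs_sub_le_dist_profile σ τ j (a j)
    _ = Fintype.card N * dist σ τ := by simp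

lemma dist_update_update_le [Fintype N] [DecidableEq N] (σ τ : ∀ i, A i → ℝ) (i : N) (ρ : A i → ℝ) :
    dist (Function.update σ i ρ) (Function.update τ i ρ) ≤ dist σ τ := by
  refine dist_profile_le dist_nonneg fun j a => ?_
  rcases eq_or_ne j i with rfl | hj
  · simp
  · simpa [Function.update_of_ne hj] using abs_sub_le_dist_profile σ τ j a

lemma abs_devUtil_le [Fintype N] [DecidableEq N] [∀ i, DecidableEq (A i)]
    (u : N → (∀ j, A j) → ℝ) {σ : ∀ i, A i → ℝ} (hσ : IsStrategy σ)
    (i : N) (ai : A i) : |devUtil u σ i ai| ≤ ∑ a, |u i a| :=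
  abs_expUtil_le u (hσ.update_pure i ai) i

lemma abs_devUtil_sub_le [Fintype N] [DecidableEq N] [∀ i, DecidableEq (A i)]
    (u : N → (∀ j, A j) → ℝ) {σ τ : ∀ i, A i → ℝ}
    (hσ : IsStrategy σ) (hτ : IsStrategy τ) (i : N) (ai : A i) :
    |devUtil u σ i ai - devUtil u τ i ai| ≤ (∑ a, |u i a|) * (Fintype.card N * dist σ τ) :=
  (abs_expUtil_sub_le u (hσ.update_pure i ai) (hτ.update_pure i ai) i).trans <| by
    gcongr
    exact dist_update_update_le σ τ i _

lemma continuous_devUtil [Fintype N] [DecidableEq N] [∀ i, DecidableEq (A i)]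
    (u : N → (∀ j, A j) → ℝ) (i : N) (ai : A i) :
    Continuous fun σ : ∀ i, A i → ℝ => devUtil u σ i ai := by
  unfold devUtil expUtil
  fun_prop

lemma WeaklyPayoffMonotone.eventually_devUtil_lt [Fintype N] [DecidableEq N]
    [∀ i, DecidableEq (A i)] {u : N → (∀ j, A j) → ℝ} {μ : ∀ i, A i → ℝ}
    (hμ : WeaklyPayoffMonotone u μ) :
    ∀ᶠ σ in 𝓝 μ, ∀ i a b, μ i b < μ i a → devUtil u σ i b < devUtil u σ i a := by
  simp only [eventually_all]
  exact fun i a b hab => (continuous_devUtil u i b).continuousAt.eventually_lt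
    (continuous_devUtil u i a).continuousAt (hμ.2 i a b hab)

end Profiles

lemma le_iff_le_of_sub_eq {p δ m₁ m₂ v₁ v₂ g₁ g₂ : ℝ} (hp : 0 ≤ p) (hδ : 0 < δ)
    (hg : g₁ - g₂ = p * (m₁ - m₂) + δ * (v₁ - v₂))
    (h₁ : m₂ < m₁ → v₂ < v₁) (h₂ : m₁ < m₂ → v₁ < v₂) : g₂ ≤ g₁ ↔ v₂ ≤ v₁ := by
  rcases lt_trichotomy m₂ m₁ with hm | rfl | hm
  · have hv := h₁ hm
    exact iff_of_true (by nlinarith) hv.le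
  · constructor <;> intro h <;> nlinarith
  · have hv := h₂ hm
    exact iff_of_false (by nlinarith) hv.not_ge

lemma eventually_nhdsGT_mul_lt (c : ℝ) {d : ℝ} (hd : 0 < d) :
    ∀ᶠ t in 𝓝[>] (0 : ℝ), t * c < d :=
  nhdsWithin_le_nhds <|
    ((continuous_mul_const c).tendsto' 0 0 (zero_mul c)).eventually_lt_const hd

section Tilt

variable {N : Type} {A : N → Type} [∀ i, Fintype (A i)]

noncomputable def tilt (V : (∀ i, A i → ℝ) → ∀ i, A i → ℝ) (μ : ∀ i, A i → ℝ) (η δ : ℝ)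
    (σ : ∀ i, A i → ℝ) : ∀ i, A i → ℝ :=
  fun i a => (1 - η) * μ i a + η / Fintype.card (A i) + δ * (V σ i a - 𝔼 b, V σ i b)

variable {V : (∀ i, A i → ℝ) → ∀ i, A i → ℝ} {μ : ∀ i, A i → ℝ} {η δ : ℝ}

lemma tilt_sub_tilt (σ : ∀ i, A i → ℝ) (i : N) (a b : A i) :
    tilt V μ η δ σ i a - tilt V μ η δ σ i b =
      (1 - η) * (μ i a - μ i b) + δ * (V σ i a - V σ i b) := by
  unfold tilt; ring

lemma sum_tilt [∀ i, Nonempty (A i)] (hμ : IsStrategy μ) (σ : ∀ i, A i → ℝ) (i : N) :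
    ∑ a, tilt V μ η δ σ i a = 1 := by
  simp only [tilt, Finset.sum_add_distrib, ← Finset.mul_sum, sum_sub_expect, hμ.2 i,
    Finset.sum_const, Finset.card_univ, nsmul_eq_mul]
  field_simp
  ring

lemma tilt_pos [∀ i, Nonempty (A i)] (hμ : IsStrategy μ) (hη : η ≤ 1) (hδ : 0 ≤ δ)
    {σ : ∀ i, A i → ℝ} {M : ℝ} (hV : ∀ i a, |V σ i a| ≤ M)
    (hsmall : ∀ i, 2 * δ * M * Fintype.card (A i) < η) (i : N) (a : A i) :
    0 < tilt V μ η δ σ i a := by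
  have hμa : 0 ≤ (1 - η) * μ i a := mul_nonneg (by linarith) (hμ.1 i a)
  have htilt : -(δ * (2 * M)) ≤ δ * (V σ i a - 𝔼 b, V σ i b) := by
    rw [neg_le, ← mul_neg]
    exact mul_le_mul_of_nonneg_left (neg_le.1 (abs_le.1 (abs_sub_expect_le (hV i) a)).1) hδ
  have huniform : 2 * δ * M < η / Fintype.card (A i) := by
    rw [lt_div_iff₀ (by exact_mod_cast Fintype.card_pos)]
    exact hsmall i
  unfold tilt
  linarith

lemma abs_tilt_sub_tilt_le (hδ : 0 ≤ δ) {σ τ : ∀ i, A i → ℝ} {D : ℝ}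
    (hV : ∀ i a, |V σ i a - V τ i a| ≤ D) (i : N) (a : A i) :
    |tilt V μ η δ σ i a - tilt V μ η δ τ i a| ≤ 2 * δ * D := by
  have hsub : tilt V μ η δ σ i a - tilt V μ η δ τ i a =
      δ * ((V σ i a - V τ i a) - 𝔼 b, (V σ i b - V τ i b)) := by
    rw [Finset.expect_sub_distrib]; unfold tilt; ring
  rw [hsub, abs_mul, abs_of_nonneg hδ, mul_comm 2 δ, mul_assoc]
  exact mul_le_mul_of_nonneg_left (abs_sub_expect_le (hV i) a) hδ

lemma abs_tilt_sub_le (hμ : IsStrategy μ) (hη : 0 ≤ η) (hδ : 0 ≤ δ)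
    {σ : ∀ i, A i → ℝ} {M : ℝ} (hV : ∀ i a, |V σ i a| ≤ M) (i : N) (a : A i) :
    |tilt V μ η δ σ i a - μ i a| ≤ η + 2 * δ * M := by
  have huniform : |1 / (Fintype.card (A i) : ℝ) - μ i a| ≤ 1 := by
    have hcard : (1 : ℝ) ≤ Fintype.card (A i) := by
      exact_mod_cast Fintype.card_pos_iff.2 ⟨a⟩
    have hle : 1 / (Fintype.card (A i) : ℝ) ≤ 1 := by rw [div_le_one (by linarith)]; exact hcard
    rw [abs_le]
    constructor <;>
      linarith [hμ.1 i a, hμ.le_one i a, one_div_nonneg.2 (zero_le_one.trans hcard)]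
  have hsub : tilt V μ η δ σ i a - μ i a =
      η * (1 / Fintype.card (A i) - μ i a) + δ * (V σ i a - 𝔼 b, V σ i b) := by
    unfold tilt; ring
  rw [hsub]
  refine (abs_add_le _ _).trans ?_
  rw [abs_mul, abs_mul, abs_of_nonneg hη, abs_of_nonneg hδ]
  linarith [mul_le_of_le_one_right hη huniform,
    mul_le_mul_of_nonneg_left (abs_sub_expect_le (hV i) a) hδ]

lemma le_iff_le_of_tilt_eq {γ : ∀ i, A i → ℝ} (hfix : tilt V μ η δ γ = γ) (hη : η ≤ 1)
    (hδ : 0 < δ) (hV : ∀ i a b, μ i b < μ i a → V γ i b < V γ i a) (i : N) (a b : A i) :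
    γ i b ≤ γ i a ↔ V γ i b ≤ V γ i a := by
  have hsub := tilt_sub_tilt (V := V) (μ := μ) (η := η) (δ := δ) γ i a b
  rw [hfix] at hsub
  exact le_iff_le_of_sub_eq (sub_nonneg.2 hη) hδ hsub (hV i a b) (hV i b a)

lemma exists_isStrategy_tilt_eq [Fintype N] [∀ i, Nonempty (A i)] (hμ : IsStrategy μ)
    (hη : η ≤ 1) (hδ : 0 ≤ δ) {M L : ℝ} (hbound : ∀ σ, IsStrategy σ → ∀ i a, |V σ i a| ≤ M)
    (hlip : ∀ σ τ, IsStrategy σ → IsStrategy τ → ∀ i a, |V σ i a - V τ i a| ≤ L * dist σ τ)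
    (hsmall : ∀ i, 2 * δ * M * Fintype.card (A i) < η) (hcontr : 2 * δ * L < 1) :
    ∃ γ, IsStrategy γ ∧ Interior γ ∧ tilt V μ η δ γ = γ := by
  have hmaps : Set.MapsTo (tilt V μ η δ) {σ | IsStrategy σ} {σ | IsStrategy σ} := fun σ hσ =>
    ⟨fun i a => (tilt_pos hμ hη hδ (hbound σ hσ) hsmall i a).le, sum_tilt hμ σ⟩
  have hcontracting : ContractingWith (2 * δ * L).toNNReal (hmaps.restrict _ _ _) := by
    refine ⟨by rwa [Real.toNNReal_lt_one], LipschitzWith.of_dist_le_mul fun σ τ => ?_⟩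
    rw [Subtype.dist_eq, Subtype.dist_eq]
    refine dist_profile_le (by positivity) fun i a => ?_
    calc _ ≤ 2 * δ * (L * dist σ τ) := abs_tilt_sub_tilt_le hδ (hlip σ τ σ.2 τ.2) i a
      _ ≤ (2 * δ * L).toNNReal * dist σ τ := by
          rw [← mul_assoc]
          gcongr
          exact Real.le_coe_toNNReal _
  obtain ⟨γ, hγ, hfix, -⟩ := hcontracting.exists_fixedPoint'
    isClosed_setOf_isStrategy.isComplete hmaps hμ (edist_ne_top _ _)
  refine ⟨γ, hγ, fun i a => ?_, hfix⟩
  have hpos := tilt_pos hμ hη hδ (hbound γ hγ) hsmall i a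
  rwa [hfix] at hpos

end Tilt

theorem WeaklyPayoffMonotone.exists_interior_payoffMonotone_near {N : Type} [Fintype N]
    [DecidableEq N] {A : N → Type} [∀ i, Fintype (A i)] [∀ i, DecidableEq (A i)]
    [∀ i, Nonempty (A i)] {u : N → (∀ j, A j) → ℝ} {μ : ∀ i, A i → ℝ}
    (hμ : WeaklyPayoffMonotone u μ) {ε : ℝ} (hε : 0 < ε) :
    ∃ γ : ∀ i, A i → ℝ, Interior γ ∧ PayoffMonotone u γ ∧ ∀ i a, |μ i a - γ i a| < ε := by
  obtain ⟨r, hr, hnear⟩ := Metric.eventually_nhds_iff.1 hμ.eventually_devUtil_lt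
  set M := ∑ i, ∑ a, |u i a|
  have hui : ∀ i, ∑ a, |u i a| ≤ M := fun i =>
    Finset.single_le_sum (f := fun i => ∑ a, |u i a|)
      (fun i _ => Finset.sum_nonneg fun a _ => abs_nonneg _) (Finset.mem_univ i)
  have hbound : ∀ σ, IsStrategy σ → ∀ i a, |devUtil u σ i a| ≤ M := fun σ hσ i a =>
    (abs_devUtil_le u hσ i a).trans (hui i)
  have hlip : ∀ σ τ, IsStrategy σ → IsStrategy τ → ∀ i a,
      |devUtil u σ i a - devUtil u τ i a| ≤ M * Fintype.card N * dist σ τ := fun σ τ hσ hτ i a =>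
    (abs_devUtil_sub_le u hσ hτ i a).trans <| by
      rw [mul_assoc]; exact mul_le_mul_of_nonneg_right (hui i) (by positivity)
  obtain ⟨η, hη, hη₁, hηε, hηr⟩ : ∃ η, 0 < η ∧ η * 1 < 1 ∧ η * 2 < ε ∧ η * 2 < r :=
    (eventually_mem_nhdsWithin.and <| (eventually_nhdsGT_mul_lt 1 one_pos).and <|
      (eventually_nhdsGT_mul_lt 2 hε).and (eventually_nhdsGT_mul_lt 2 hr)).exists
  obtain ⟨δ, hδ, hsmall, hcontr, hδM⟩ : ∃ δ, 0 < δ ∧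
      (∀ i, δ * (2 * M * Fintype.card (A i)) < η) ∧ δ * (2 * (M * Fintype.card N)) < 1 ∧
        δ * (2 * M) < η :=
    (eventually_mem_nhdsWithin.and <|
      (eventually_all.2 fun i => eventually_nhdsGT_mul_lt _ hη).and <|
      (eventually_nhdsGT_mul_lt _ one_pos).and (eventually_nhdsGT_mul_lt _ hη)).exists
  obtain ⟨γ, hγ, hγint, hfix⟩ := exists_isStrategy_tilt_eq (η := η) hμ.1 (by linarith) hδ.le
    hbound hlip (fun i => by linarith [hsmall i]) (by linarith)
  have hγμ : ∀ i a, |γ i a - μ i a| < 2 * η := fun i a => by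
    have hdist := abs_tilt_sub_le (V := devUtil u) (σ := γ) hμ.1 hη.le hδ.le (hbound γ hγ) i a
    rw [hfix] at hdist
    linarith
  refine ⟨γ, hγint, ⟨hγ, fun i a b => le_iff_le_of_tilt_eq hfix (by linarith) hδ ?_ i a b⟩,
    fun i a => by rw [abs_sub_comm]; linarith [hγμ i a]⟩
  exact hnear ((dist_profile_le (by positivity) fun i a => (hγμ i a).le).trans_lt (by linarith))

lemma PayoffMonotone.weaklyPayoffMonotone {N : Type} [Fintype N] [DecidableEq N] {A : N → Type}
    [∀ i, Fintype (A i)] [∀ i, DecidableEq (A i)] {u : N → (∀ j, A j) → ℝ}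
    {σ : ∀ i, A i → ℝ} (hσ : PayoffMonotone u σ) :
    WeaklyPayoffMonotone u σ :=
  ⟨hσ.1, fun i a b hlt => lt_of_not_ge fun hle => hlt.not_ge ((hσ.2 i b a).2 hle)⟩

lemma ConvergesTo.of_abs_sub_lt {N : Type} {A : N → Type} {s t : ℕ → ∀ i, A i → ℝ}
    {σ : ∀ i, A i → ℝ} (hs : ConvergesTo s σ)
    (hst : ∀ n i a, |s n i a - t n i a| < 1 / ((n : ℝ) + 1)) : ConvergesTo t σ := by
  intro i a
  have hdiff : Tendsto (fun n => s n i a - t n i a) atTop (𝓝 0) :=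
    squeeze_zero_norm (fun n => (hst n i a).le) tendsto_one_div_add_atTop_nhds_zero_nat
  simpa using (hs i a).sub hdiff

/-- weakly payoff monotone profiles can be approximated by interior
payoff monotone ones; consequently the respective sets of limits coincide. -/
theorem wpm_approximated_by_interior_pm {N : Type} [Fintype N] [DecidableEq N] {A : N → Type}
    [∀ i, Fintype (A i)] [∀ i, DecidableEq (A i)] [∀ i, Nonempty (A i)]
    (u : ∀ i : N, (∀ j, A j) → ℝ) :
    (∀ μ : ∀ i, A i → ℝ, WeaklyPayoffMonotone u μ → ∀ ε : ℝ, 0 < ε →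
      ∃ γ : ∀ i, A i → ℝ, Interior γ ∧ PayoffMonotone u γ ∧
        ∀ (i : N) (ai : A i), |μ i ai - γ i ai| < ε) ∧
    ∀ σ : ∀ i, A i → ℝ,
      ((∃ s : ℕ → ∀ i, A i → ℝ,
          (∀ n, WeaklyPayoffMonotone u (s n)) ∧ ConvergesTo s σ) ↔
        (∃ s : ℕ → ∀ i, A i → ℝ,
          (∀ n, Interior (s n) ∧ PayoffMonotone u (s n)) ∧ ConvergesTo s σ)) := by
  refine ⟨fun μ hμ ε hε => hμ.exists_interior_payoffMonotone_near hε, fun σ => ⟨?_, ?_⟩⟩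
  · rintro ⟨s, hs, hconv⟩
    choose γ hγint hγpm hγ using fun n : ℕ =>
      (hs n).exists_interior_payoffMonotone_near (ε := 1 / ((n : ℝ) + 1)) (by positivity)
    exact ⟨γ, fun n => ⟨hγint n, hγpm n⟩, hconv.of_abs_sub_lt hγ⟩
  · rintro ⟨s, hs, hconv⟩
    exact ⟨s, fun n => (hs n).2.weaklyPayoffMonotone, hconv⟩
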